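/- arXiv:2412.21129 — 2 statements merged into one kernel-verified Lean document; each statement's English description precedes it below -/
import Mathlib

section
/- Let f : ℕ → ℂ be a strongly additive function and C ≥ 1 a constant such that |f(p)| ≤ C for every prime p, Σ_{n≤N} |f(n)| ≪ N log log N, and Σ_{n≤N} |f(n)|² ≪ N (log log N)². Then Σ_{mn≤N} |f(mn) − (f(m)+f(n))| Λ(m) ≪ N log log N, where Λ is the von Mangoldt function. -/
/-!
For a prime power `m = p ^ k`, strong additivity makes `f (m * n) - (f m + f n)` vanish unless
`p ∣ n`, in which case it equals `-f p`. So the inner sum for `m` is at most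
`C * log p * N / p ^ (k + 1)`, and `∑ log p / p ^ (k + 1)` over all prime powers converges
(it is `≪ ∑ p ^ (-3/2)`): the whole double sum is `O(N)`.
-/

open Filter Topology Finset ArithmeticFunction

noncomputable section

/-- A strongly additive complex-valued arithmetic function. -/
def StronglyAdditiveC (f : ℕ → ℂ) : Prop :=
  (∀ m n : ℕ, Nat.Coprime m n → f (m * n) = f m + f n) ∧
  (∀ p k : ℕ, p.Prime → 1 ≤ k → f (p ^ k) = f p)

theorem sum_inv_pow_succ_le {x : ℝ} (hx : 2 ≤ x) (N : ℕ) :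
    ∑ k ∈ Icc 1 N, (x ^ (k + 1))⁻¹ ≤ 2 / x ^ 2 := by
  have hx0 : 0 < x := by linarith
  have hy : x⁻¹ ≤ 2⁻¹ := inv_anti₀ two_pos hx
  calc ∑ k ∈ Icc 1 N, (x ^ (k + 1))⁻¹ = x⁻¹ * ∑ k ∈ Ico 1 (N + 1), x⁻¹ ^ k := by
        rw [Ico_add_one_right_eq_Icc, mul_sum]
        exact sum_congr rfl fun k _ ↦ by rw [pow_succ, mul_inv, inv_pow, mul_comm]
    _ ≤ x⁻¹ * (x⁻¹ ^ 1 / (1 - x⁻¹)) := by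
        gcongr
        exact geom_sum_Ico_le_of_lt_one (by positivity) (by linarith)
    _ ≤ x⁻¹ * (x⁻¹ / 2⁻¹) := by
        rw [pow_one]
        gcongr
        linarith
    _ = 2 / x ^ 2 := by field_simp

theorem sum_log_div_pow_succ_le {x : ℝ} (hx : 2 ≤ x) (N : ℕ) :
    ∑ k ∈ Icc 1 N, Real.log x / x ^ (k + 1) ≤ 4 * x ^ (-(3 / 2) : ℝ) := by
  have hx0 : 0 < x := by linarith
  have hlog : Real.log x ≤ 2 * x ^ (1 / 2 : ℝ) := by
    have := Real.log_le_rpow_div hx0.le (by norm_num : (0 : ℝ) < 1 / 2)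
    linarith [show x ^ (1 / 2 : ℝ) / (1 / 2) = 2 * x ^ (1 / 2 : ℝ) by ring]
  have hrpow : x ^ (1 / 2 : ℝ) / x ^ 2 = x ^ (-(3 / 2) : ℝ) := by
    rw [← Real.rpow_natCast, ← Real.rpow_sub hx0]
    norm_num
  calc ∑ k ∈ Icc 1 N, Real.log x / x ^ (k + 1)
      = Real.log x * ∑ k ∈ Icc 1 N, (x ^ (k + 1))⁻¹ := by simp only [div_eq_mul_inv, mul_sum]
    _ ≤ 2 * x ^ (1 / 2 : ℝ) * (2 / x ^ 2) := by
        have := Real.log_nonneg (by linarith : 1 ≤ x)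
        gcongr
        exact sum_inv_pow_succ_le hx N
    _ = 4 * x ^ (-(3 / 2) : ℝ) := by rw [← hrpow]; ring

theorem sum_vonMangoldt_div_mul_minFac_le (N : ℕ) :
    ∑ m ∈ Icc 1 N, Λ m / (m * m.minFac) ≤ 4 * ∑' n : ℕ, (n : ℝ) ^ (-(3 / 2) : ℝ) := by
  classical
  set F : ℕ → ℝ := fun m ↦ Λ m / (m * m.minFac)
  have hF : ∀ m, 0 ≤ F m := fun m ↦ by positivity
  set P := {p ∈ Icc 1 N | p.Prime}
  have hcover : {m ∈ Icc 1 N | IsPrimePow m} ⊆ (P ×ˢ Icc 1 N).image fun q ↦ q.1 ^ q.2 := by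
    intro m hm
    obtain ⟨hmN, hm⟩ := mem_filter.1 hm
    obtain ⟨p, k, hp, hk, rfl⟩ := (isPrimePow_nat_iff _).1 hm
    have hpk := (mem_Icc.1 hmN).2
    have hp_le := Nat.le_self_pow hk.ne' p
    have hk_le : k < p ^ k := Nat.lt_pow_self hp.one_lt
    refine mem_image.2 ⟨(p, k), ?_, rfl⟩
    simp only [P, mem_product, mem_filter, mem_Icc]
    exact ⟨⟨⟨hp.one_le, by omega⟩, hp⟩, by omega, by omega⟩
  -- `(p, k) ↦ p ^ k` need not be injective on `P ×ˢ Icc 1 N`; nonnegativity of `F` suffices.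
  calc ∑ m ∈ Icc 1 N, F m = ∑ m ∈ Icc 1 N with IsPrimePow m, F m :=
        (sum_filter_of_ne fun m _ hm ↦ by
          simpa [F, vonMangoldt_eq_zero_iff] using left_ne_zero_of_mul hm).symm
    _ ≤ ∑ m ∈ (P ×ˢ Icc 1 N).image fun q ↦ q.1 ^ q.2, F m :=
        sum_le_sum_of_subset_of_nonneg hcover fun m _ _ ↦ hF m
    _ ≤ ∑ q ∈ P ×ˢ Icc 1 N, F (q.1 ^ q.2) := sum_image_le_of_nonneg fun m _ ↦ hF m
    _ = ∑ p ∈ P, ∑ k ∈ Icc 1 N, Real.log p / (p : ℝ) ^ (k + 1) := by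
        rw [sum_product]
        refine sum_congr rfl fun p hp ↦ sum_congr rfl fun k hk ↦ ?_
        have hp : p.Prime := (mem_filter.1 hp).2
        have hk : k ≠ 0 := by have := (mem_Icc.1 hk).1; omega
        simp only [F, vonMangoldt_apply_pow hk, vonMangoldt_apply_prime hp, hp.pow_minFac hk,
          Nat.cast_pow, pow_succ]
    _ ≤ ∑ p ∈ P, 4 * (p : ℝ) ^ (-(3 / 2) : ℝ) :=
        sum_le_sum fun p hp ↦
          sum_log_div_pow_succ_le (by exact_mod_cast (mem_filter.1 hp).2.two_le) N
    _ ≤ 4 * ∑' n : ℕ, (n : ℝ) ^ (-(3 / 2) : ℝ) := by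
        rw [← mul_sum]
        gcongr
        exact (Real.summable_nat_rpow.2 (by norm_num)).sum_le_tsum _ fun n _ ↦ by positivity

namespace StronglyAdditiveC

variable {f : ℕ → ℂ} {p k n : ℕ}

theorem apply_prime_pow_mul_of_not_dvd (hf : StronglyAdditiveC f) (hp : p.Prime) (hk : k ≠ 0)
    (hpn : ¬ p ∣ n) : f (p ^ k * n) = f p + f n := by
  rw [hf.1 _ _ ((hp.coprime_iff_not_dvd.2 hpn).pow_left k),
    hf.2 p k hp (Nat.one_le_iff_ne_zero.2 hk)]

theorem apply_prime_pow_mul_of_dvd (hf : StronglyAdditiveC f) (hp : p.Prime) (hn : n ≠ 0)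
    (hpn : p ∣ n) : f (p ^ k * n) = f n := by
  obtain ⟨e, n', hpn', rfl⟩ := Nat.exists_eq_pow_mul_and_not_dvd hn p hp.ne_one
  have he : e ≠ 0 := by
    rintro rfl
    exact hpn' (by simpa using hpn)
  rw [← mul_assoc, ← pow_add, hf.apply_prime_pow_mul_of_not_dvd hp (by omega) hpn',
    hf.apply_prime_pow_mul_of_not_dvd hp he hpn']

theorem norm_apply_prime_pow_mul_sub_le (hf : StronglyAdditiveC f) (hp : p.Prime) (hk : k ≠ 0)
    (hn : n ≠ 0) {C : ℝ} (hfp : ‖f p‖ ≤ C) :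
    ‖f (p ^ k * n) - (f (p ^ k) + f n)‖ ≤ if p ∣ n then C else 0 := by
  have hpk : f (p ^ k) = f p := hf.2 p k hp (Nat.one_le_iff_ne_zero.2 hk)
  split_ifs with hpn
  · rwa [hf.apply_prime_pow_mul_of_dvd hp hn hpn, hpk, sub_add_cancel_right, norm_neg]
  · rw [hf.apply_prime_pow_mul_of_not_dvd hp hk hpn, hpk, sub_self, norm_zero]

theorem sum_norm_apply_prime_pow_mul_sub_le (hf : StronglyAdditiveC f) (hp : p.Prime)
    (hk : k ≠ 0) {C : ℝ} (hfp : ‖f p‖ ≤ C) (M : ℕ) :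
    ∑ n ∈ Icc 1 M, ‖f (p ^ k * n) - (f (p ^ k) + f n)‖ ≤ C * (M / p : ℕ) := by
  calc ∑ n ∈ Icc 1 M, ‖f (p ^ k * n) - (f (p ^ k) + f n)‖
      ≤ ∑ n ∈ Icc 1 M, if p ∣ n then C else 0 :=
        sum_le_sum fun n hn ↦ hf.norm_apply_prime_pow_mul_sub_le hp hk
          (by have := (mem_Icc.1 hn).1; omega) hfp
    _ = C * (M / p : ℕ) := by
        rw [← sum_filter, sum_const, show Icc 1 M = Ioc 0 M from Icc_add_one_left_eq_Ioc 0 M,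
          Nat.Ioc_filter_dvd_card_eq_div, nsmul_eq_mul, mul_comm]

theorem sum_norm_apply_mul_sub_mul_vonMangoldt_le (hf : StronglyAdditiveC f) {C : ℝ}
    (hfp : ∀ p : ℕ, p.Prime → ‖f p‖ ≤ C) (N m : ℕ) :
    ∑ n ∈ Icc 1 (N / m), ‖f (m * n) - (f m + f n)‖ * Λ m ≤ C * N * (Λ m / (m * m.minFac)) := by
  by_cases hm : IsPrimePow m
  · obtain ⟨p, k, hp, hk, rfl⟩ := (isPrimePow_nat_iff m).1 hm
    have hΛ : Λ (p ^ k) = Real.log p := by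
      rw [vonMangoldt_apply_pow hk.ne', vonMangoldt_apply_prime hp]
    have hC : 0 ≤ C := (norm_nonneg _).trans (hfp p hp)
    have hlog : 0 ≤ Real.log p := Real.log_nonneg (by exact_mod_cast hp.one_le)
    rw [← sum_mul, hΛ, hp.pow_minFac hk.ne']
    calc (∑ n ∈ Icc 1 (N / p ^ k), ‖f (p ^ k * n) - (f (p ^ k) + f n)‖) * Real.log p
        ≤ C * (N / p ^ k / p : ℕ) * Real.log p := by
          gcongr
          exact hf.sum_norm_apply_prime_pow_mul_sub_le hp hk.ne' (hfp p hp) _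
      _ ≤ C * (N / (p ^ k * p) : ℝ) * Real.log p := by
          rw [Nat.div_div_eq_div_mul]
          gcongr
          exact_mod_cast Nat.cast_div_le
      _ = C * N * (Real.log p / ((p ^ k : ℕ) * p)) := by push_cast; ring
  · simp [vonMangoldt_eq_zero_iff.2 hm]

end StronglyAdditiveC

theorem mul_le_div_log_log_three_mul_log_log {A x : ℝ} (hA : 0 ≤ A) (hx : 3 ≤ x) :
    A * x ≤ A / Real.log (Real.log 3) * x * Real.log (Real.log x) := by
  have hlog3 : 1 < Real.log 3 := by
    rw [Real.lt_log_iff_exp_lt (by norm_num)]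
    linarith [Real.exp_one_lt_d9]
  have hloglog3 : 0 < Real.log (Real.log 3) := Real.log_pos hlog3
  have hmono : Real.log (Real.log 3) ≤ Real.log (Real.log x) :=
    Real.log_le_log (by linarith) (Real.log_le_log (by norm_num) hx)
  have hx0 : 0 ≤ x := by linarith
  calc A * x = A / Real.log (Real.log 3) * x * Real.log (Real.log 3) := by field_simp
    _ ≤ A / Real.log (Real.log 3) * x * Real.log (Real.log x) := by gcongr

theorem statement8_general
    (f : ℕ → ℂ) (hadd : StronglyAdditiveC f) (C : ℝ)
    (hfp : ∀ p : ℕ, p.Prime → ‖f p‖ ≤ C) :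
    ∃ K : ℝ, ∀ N : ℕ, 3 ≤ N →
      ∑ m ∈ Finset.Icc 1 N, ∑ n ∈ Finset.Icc 1 (N / m),
        ‖f (m * n) - (f m + f n)‖ * ArithmeticFunction.vonMangoldt m ≤
      K * N * Real.log (Real.log N) := by
  set B := ∑' n : ℕ, (n : ℝ) ^ (-(3 / 2) : ℝ)
  have hC : 0 ≤ C := (norm_nonneg _).trans (hfp 2 Nat.prime_two)
  have hB : 0 ≤ B := tsum_nonneg fun n ↦ by positivity
  refine ⟨C * (4 * B) / Real.log (Real.log 3), fun N hN ↦ ?_⟩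
  calc ∑ m ∈ Icc 1 N, ∑ n ∈ Icc 1 (N / m), ‖f (m * n) - (f m + f n)‖ * Λ m
      ≤ ∑ m ∈ Icc 1 N, C * N * (Λ m / (m * m.minFac)) :=
        sum_le_sum fun m _ ↦ hadd.sum_norm_apply_mul_sub_mul_vonMangoldt_le hfp N m
    _ ≤ C * N * (4 * B) := by
        rw [← mul_sum]
        gcongr
        exact sum_vonMangoldt_div_mul_minFac_le N
    _ = C * (4 * B) * N := by ring
    _ ≤ _ := mul_le_div_log_log_three_mul_log_log (by positivity) (by exact_mod_cast hN)

theorem statement8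
    (f : ℕ → ℂ) (hadd : StronglyAdditiveC f) (C : ℝ) (hC : 1 ≤ C)
    (hfp : ∀ p : ℕ, p.Prime → ‖f p‖ ≤ C)
    (C₁ : ℝ) (h1 : ∀ N : ℕ, 3 ≤ N →
      ∑ n ∈ Finset.Icc 1 N, ‖f n‖ ≤ C₁ * N * Real.log (Real.log N))
    (C₂ : ℝ) (h2 : ∀ N : ℕ, 3 ≤ N →
      ∑ n ∈ Finset.Icc 1 N, ‖f n‖ ^ 2 ≤ C₂ * N * (Real.log (Real.log N)) ^ 2) :
    ∃ K : ℝ, ∀ N : ℕ, 3 ≤ N →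
      ∑ m ∈ Finset.Icc 1 N, ∑ n ∈ Finset.Icc 1 (N / m),
        ‖f (m * n) - (f m + f n)‖ * ArithmeticFunction.vonMangoldt m ≤
      K * N * Real.log (Real.log N) :=
  statement8_general f hadd C hfp
end
end

section
/- Let q ∈ ℕ and a ∈ ℤ with gcd(a,q) = 1, and for each k ∈ ℕ set a_k = a k / gcd(q,k) and q_k = q / gcd(q,k). Then Σ_{k=1}^∞ (1/(φ(q_k) k²)) Σ_{ℓ=1, gcd(ℓ,q_k)=1}^{q_k} e(a_k ℓ / q_k) = ζ(2) (−1)^{ω(q)} (Π_{p|q} p) / q². -/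
open Filter Topology Finset

noncomputable section

/-- `e(x) = exp(2πix)`. -/
def ee (x : ℝ) : ℂ := Complex.exp (2 * Real.pi * Complex.I * x)

/-!
Since `a_k` is coprime to `q_k`, the inner sum is the Ramanujan sum `c_{q_k}(a_k) = μ(q_k)`
(detect coprimality by `∑_{d ∣ (ℓ, N)} μ(d)` and sum the geometric progressions). The series
is therefore `∑_k F(gcd(q, k)) / k²` with `F(e) = μ(q/e) / φ(q/e)`. Writing
`F(g) = ∑_{d ∣ g} (μ * F)(d)` turns it into `ζ(2) ∑_{d ∣ q} (μ * F)(d) / d²`, and unfolding the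
convolution gives `q⁻² ∑_{m ∣ q} μ(m) J₂(m) / φ(m)`, where `J₂(m) = m² ∏_{p ∣ m} (1 - p⁻²)`
equals `φ(m) ψ(m)` for Dedekind's psi function `ψ`. As `ψ` is multiplicative with
`ψ(p) = p + 1`, `∑_{m ∣ q} μ(m) ψ(m) = ∏_{p ∣ q} (1 - ψ(p)) = ∏_{p ∣ q} (-p)`.
-/

open ArithmeticFunction
open scoped ArithmeticFunction.Moebius ArithmeticFunction.zeta

lemma ee_intCast (b : ℤ) : ee b = 1 := by
  rw [ee, ← Complex.exp_int_mul_two_pi_mul_I b]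
  push_cast
  ring_nf

lemma ee_natCast_mul (m : ℕ) (x : ℝ) : ee (m * x) = ee x ^ m := by
  rw [ee, ee, ← Complex.exp_nat_mul]
  push_cast
  ring_nf

lemma ee_eq_one_iff (x : ℝ) : ee x = 1 ↔ ∃ n : ℤ, x = n := by
  have h2πI : 2 * Real.pi * Complex.I ≠ 0 := by simp [Real.pi_ne_zero]
  rw [ee, Complex.exp_eq_one_iff]
  refine exists_congr fun n => ?_
  rw [mul_comm (n : ℂ), mul_right_inj' h2πI]
  exact_mod_cast Iff.rfl

lemma sum_Icc_ee_mul_div {M : ℕ} (hM : 0 < M) (b : ℤ) :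
    ∑ m ∈ Icc 1 M, ee (b * m / M) = if (M : ℤ) ∣ b then (M : ℂ) else 0 := by
  have hM₀ : (M : ℝ) ≠ 0 := by positivity
  have hpow : ∀ m : ℕ, ee (b * m / M) = ee (b / M) ^ m := fun m => by
    rw [← ee_natCast_mul]
    ring_nf
  simp_rw [hpow]
  split_ifs with hdvd
  · obtain ⟨c, rfl⟩ := hdvd
    rw [show ((M * c : ℤ) : ℝ) / M = c by push_cast; field_simp, ee_intCast]
    simp
  · have hne : ee (b / M) ≠ 1 := fun h => by
      obtain ⟨n, hn⟩ := (ee_eq_one_iff _).mp h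
      rw [div_eq_iff hM₀] at hn
      exact hdvd ⟨n, by exact_mod_cast hn.trans (mul_comm _ _)⟩
    have hroot : ee (b / M) ^ M = 1 := by
      rw [← ee_natCast_mul, mul_div_cancel₀ _ hM₀, ee_intCast]
    rw [← Ico_add_one_right_eq_Icc, geom_sum_Ico hne (by omega), pow_succ, hroot]
    simp

lemma sum_Icc_filter_dvd {M : Type*} [AddCommMonoid M] {d n : ℕ} (hd : d ∣ n) (f : ℕ → M) :
    ∑ ℓ ∈ Icc 1 n with d ∣ ℓ, f ℓ = ∑ m ∈ Icc 1 (n / d), f (d * m) := by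
  rcases Nat.eq_zero_or_pos d with rfl | hd₀
  · simp [Nat.eq_zero_of_zero_dvd hd]
  have himage : {ℓ ∈ Icc 1 n | d ∣ ℓ} = (Icc 1 (n / d)).image (d * ·) := by
    ext ℓ
    simp only [mem_filter, mem_Icc, mem_image]
    constructor
    · rintro ⟨⟨h1, h2⟩, m, rfl⟩
      have hm : m ≠ 0 := by
        rintro rfl
        simp at h1
      refine ⟨m, ⟨Nat.one_le_iff_ne_zero.mpr hm, ?_⟩, rfl⟩
      exact (Nat.le_div_iff_mul_le hd₀).mpr (by rwa [mul_comm])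
    · rintro ⟨m, ⟨h1, h2⟩, rfl⟩
      refine ⟨⟨Nat.one_le_iff_ne_zero.mpr (by positivity), ?_⟩, dvd_mul_right d m⟩
      calc d * m ≤ d * (n / d) := Nat.mul_le_mul_left d h2
        _ = n := Nat.mul_div_cancel' hd
  rw [himage, sum_image fun _ _ _ _ h => Nat.eq_of_mul_eq_mul_left hd₀ h]

lemma ite_coprime_eq_sum_moebius {ℓ N : ℕ} (hN : N ≠ 0) :
    (if ℓ.Coprime N then 1 else 0 : ℂ) = ∑ d ∈ N.divisors with d ∣ ℓ, (μ d : ℂ) := by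
  have hfilter : {d ∈ N.divisors | d ∣ ℓ} = (ℓ.gcd N).divisors := by
    rw [← Nat.divisors_filter_dvd_of_dvd hN (Nat.gcd_dvd_right ℓ N)]
    refine filter_congr fun d hd => ?_
    rw [Nat.dvd_gcd_iff, and_iff_left (Nat.dvd_of_mem_divisors hd)]
  have h := congrArg (· (ℓ.gcd N)) (coe_zeta_mul_coe_moebius (R := ℂ))
  simp only [coe_zeta_mul_apply, intCoe_apply, one_apply] at h
  rw [hfilter, h]

def ramanujanSum (N : ℕ) (b : ℤ) : ℂ :=
  ∑ ℓ ∈ Icc 1 N with ℓ.Coprime N, ee (b * ℓ / N)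

theorem ramanujanSum_eq_sum_divisors {N : ℕ} (hN : 0 < N) (b : ℤ) :
    ramanujanSum N b = ∑ d ∈ N.divisors with ((d : ℕ) : ℤ) ∣ b, (μ (N / d) : ℂ) * d := by
  have hinner : ∀ d ∈ N.divisors, ∑ ℓ ∈ Icc 1 N with d ∣ ℓ, ee (b * ℓ / N)
      = if ((N / d : ℕ) : ℤ) ∣ b then ((N / d : ℕ) : ℂ) else 0 := fun d hd => by
    have hdN := Nat.dvd_of_mem_divisors hd
    have hd₀ : (d : ℝ) ≠ 0 := by exact_mod_cast (Nat.pos_of_mem_divisors hd).ne'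
    rw [sum_Icc_filter_dvd hdN,
      ← sum_Icc_ee_mul_div (Nat.div_pos (Nat.divisor_le hd) (Nat.pos_of_mem_divisors hd))]
    refine sum_congr rfl fun m _ => congrArg ee ?_
    rw [Nat.cast_div hdN hd₀]
    push_cast
    field_simp
  calc ramanujanSum N b
      = ∑ ℓ ∈ Icc 1 N, ∑ d ∈ N.divisors with d ∣ ℓ, (μ d : ℂ) * ee (b * ℓ / N) := by
        rw [ramanujanSum, sum_filter]
        refine sum_congr rfl fun ℓ _ => ?_
        rw [← sum_mul, ← ite_coprime_eq_sum_moebius hN.ne', ite_mul, one_mul, zero_mul]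
    _ = ∑ d ∈ N.divisors, (μ d : ℂ) * ∑ ℓ ∈ Icc 1 N with d ∣ ℓ, ee (b * ℓ / N) := by
        simp_rw [sum_filter, mul_sum, mul_ite, mul_zero]
        exact sum_comm
    _ = ∑ d ∈ N.divisors, (μ d : ℂ) * if ((N / d : ℕ) : ℤ) ∣ b then ((N / d : ℕ) : ℂ) else 0 :=
        sum_congr rfl fun d hd => by rw [hinner d hd]
    _ = ∑ d ∈ N.divisors with ((d : ℕ) : ℤ) ∣ b, (μ (N / d) : ℂ) * d := by
        rw [sum_filter, ← Nat.sum_div_divisors]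
        refine sum_congr rfl fun d hd => ?_
        rw [Nat.div_div_self (Nat.dvd_of_mem_divisors hd) hN.ne', mul_ite, mul_zero]

theorem ramanujanSum_of_coprime {N : ℕ} (hN : 0 < N) {b : ℤ} (hb : Int.gcd b N = 1) :
    ramanujanSum N b = μ N := by
  have hone : {d ∈ N.divisors | ((d : ℕ) : ℤ) ∣ b} = {1} := by
    ext d
    simp only [mem_filter, Nat.mem_divisors, mem_singleton]
    refine ⟨fun ⟨⟨hdN, _⟩, hdb⟩ => ?_, ?_⟩
    · have hd1 := Int.dvd_coe_gcd hdb (Int.natCast_dvd_natCast.mpr hdN)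
      rw [hb] at hd1
      exact_mod_cast Int.eq_one_of_dvd_one (by positivity) hd1
    · rintro rfl
      exact ⟨⟨one_dvd N, hN.ne'⟩, one_dvd b⟩
  rw [ramanujanSum_eq_sum_divisors hN, hone, sum_singleton, Nat.div_one, Nat.cast_one, mul_one]

lemma hasSum_ite_dvd_one_div_sq {d : ℕ} (hd : 0 < d) :
    HasSum (fun n : ℕ => if d ∣ n then 1 / (n : ℝ) ^ 2 else 0) (Real.pi ^ 2 / 6 / d ^ 2) := by
  have hinj : Function.Injective (d * ·) := fun _ _ h => Nat.eq_of_mul_eq_mul_left hd h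
  have hsupp : ∀ n ∉ Set.range (d * ·), (if d ∣ n then 1 / (n : ℝ) ^ 2 else 0) = 0 :=
    fun n hn => if_neg fun ⟨m, hm⟩ => hn ⟨m, hm.symm⟩
  have hcomp : (fun n : ℕ => if d ∣ n then 1 / (n : ℝ) ^ 2 else 0) ∘ (d * ·)
      = fun m : ℕ => 1 / (d : ℝ) ^ 2 * (1 / (m : ℝ) ^ 2) :=
    funext fun m => by simp [mul_pow, mul_comm]
  rw [← hinj.hasSum_iff hsupp, hcomp, div_eq_mul_one_div (_ / _), mul_comm]
  exact hasSum_zeta_two.mul_left _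

theorem hasSum_sum_divisors_gcd_div_sq (C : ℕ → ℝ) {q : ℕ} (hq : q ≠ 0) :
    HasSum (fun n : ℕ => (∑ d ∈ (q.gcd n).divisors, C d) / n ^ 2)
      (Real.pi ^ 2 / 6 * ∑ d ∈ q.divisors, C d / d ^ 2) := by
  have hterm : ∀ n : ℕ, (∑ d ∈ (q.gcd n).divisors, C d) / n ^ 2
      = ∑ d ∈ q.divisors, C d * if d ∣ n then 1 / (n : ℝ) ^ 2 else 0 := fun n => by
    rw [← Nat.divisors_filter_dvd_of_dvd hq (Nat.gcd_dvd_left q n), sum_div, sum_filter]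
    refine sum_congr rfl fun d hd => ?_
    simp only [Nat.dvd_gcd_iff, Nat.dvd_of_mem_divisors hd, true_and, mul_ite, mul_zero,
      mul_one_div]
  simp_rw [hterm, mul_sum, mul_div_assoc', mul_comm (Real.pi ^ 2 / 6), mul_div_assoc]
  exact hasSum_sum fun d hd => (hasSum_ite_dvd_one_div_sq (Nat.pos_of_mem_divisors hd)).mul_left _

theorem hasSum_gcd_div_sq (F : ArithmeticFunction ℝ) {q : ℕ} (hq : q ≠ 0) :
    HasSum (fun n : ℕ => F (q.gcd n) / n ^ 2)
      (Real.pi ^ 2 / 6 * ∑ d ∈ q.divisors, ((μ : ArithmeticFunction ℝ) * F) d / d ^ 2) := by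
  have hinv : ∀ m, ∑ d ∈ m.divisors, ((μ : ArithmeticFunction ℝ) * F) d = F m := fun m => by
    rw [← coe_zeta_mul_apply, ← mul_assoc, coe_zeta_mul_coe_moebius, one_mul]
  simpa only [hinv] using hasSum_sum_divisors_gcd_div_sq (((μ : ArithmeticFunction ℝ) * F) ·) hq

namespace ArithmeticFunction

theorem sum_divisors_moebius_mul_eq_prod_one_sub {R : Type*} [CommRing R]
    {f : ArithmeticFunction R} (hf : f.IsMultiplicative) {n : ℕ} (hn : n ≠ 0) :
    ∑ d ∈ n.divisors, (μ d : R) * f d = ∏ p ∈ n.primeFactors, (1 - f p) := by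
  have hmul : ((ζ : ArithmeticFunction R) * (μ : ArithmeticFunction R).pmul f).IsMultiplicative :=
    isMultiplicative_zeta.natCast.mul (isMultiplicative_moebius.intCast.pmul hf)
  have key : (ζ : ArithmeticFunction R) * (μ : ArithmeticFunction R).pmul f
      = prodPrimeFactors fun p => 1 - f p := by
    refine (IsMultiplicative.eq_iff_eq_on_prime_powers _ hmul _
      (IsMultiplicative.prodPrimeFactors _)).mpr ?_
    rintro p (_ | k) hp
    · rw [pow_zero, hmul.map_one, (IsMultiplicative.prodPrimeFactors _).map_one]
    rw [coe_zeta_mul_apply, Nat.sum_divisors_prime_pow hp, sum_range_succ', sum_range_succ',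
      prodPrimeFactors_apply (pow_ne_zero _ hp.ne_zero),
      Nat.primeFactors_prime_pow k.succ_ne_zero hp]
    simp [pmul_apply, moebius_apply_prime_pow hp, moebius_apply_prime hp, hf.map_one,
      sub_eq_neg_add]
  have h := congrArg (· n) key
  simp only [coe_zeta_mul_apply, pmul_apply, intCoe_apply, prodPrimeFactors_apply hn] at h
  exact h

theorem mul_pmul_of_map_mul {R : Type*} [CommSemiring R] (f g : ArithmeticFunction R)
    {h : ArithmeticFunction R} (hh : ∀ m n, h (m * n) = h m * h n) :
    (f * g).pmul h = f.pmul h * g.pmul h := by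
  ext n
  simp only [pmul_apply, mul_apply, sum_mul]
  refine sum_congr rfl fun x hx => ?_
  rw [← (Nat.mem_divisorsAntidiagonal.mp hx).1, hh]
  ring

end ArithmeticFunction

def invSq : ArithmeticFunction ℝ := ⟨fun n => ((n : ℝ) ^ 2)⁻¹, by simp⟩

lemma invSq_apply (n : ℕ) : invSq n = ((n : ℝ) ^ 2)⁻¹ := rfl

lemma invSq_mul (m n : ℕ) : invSq (m * n) = invSq m * invSq n := by
  simp only [invSq_apply, Nat.cast_mul, mul_pow, mul_inv]

lemma isMultiplicative_invSq : invSq.IsMultiplicative :=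
  ⟨by simp [invSq_apply], fun {m n} _ => invSq_mul m n⟩

theorem sum_divisors_moebius_mul_div_sq (F : ArithmeticFunction ℝ) (n : ℕ) :
    ∑ d ∈ n.divisors, ((μ : ArithmeticFunction ℝ) * F) d / d ^ 2
      = ∑ x ∈ n.divisorsAntidiagonal,
          F x.1 / x.1 ^ 2 * ∑ t ∈ x.2.divisors, (μ t : ℝ) / t ^ 2 := by
  have hpmul : ((μ : ArithmeticFunction ℝ) * F).pmul invSq
      = (μ : ArithmeticFunction ℝ).pmul invSq * F.pmul invSq :=
    mul_pmul_of_map_mul _ _ invSq_mul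
  calc ∑ d ∈ n.divisors, ((μ : ArithmeticFunction ℝ) * F) d / d ^ 2
      = ((ζ : ArithmeticFunction ℝ) * ((μ : ArithmeticFunction ℝ) * F).pmul invSq) n := by
        rw [coe_zeta_mul_apply]
        exact sum_congr rfl fun d _ => by rw [pmul_apply, invSq_apply, div_eq_mul_inv]
    _ = (F.pmul invSq * (↑ζ * (μ : ArithmeticFunction ℝ).pmul invSq)) n := by
        rw [hpmul]
        congr 1
        ring
    _ = _ := by
        rw [mul_apply]
        refine sum_congr rfl fun x _ => ?_
        simp only [coe_zeta_mul_apply, pmul_apply, intCoe_apply, invSq_apply, div_eq_mul_inv]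

def dedekindPsi : ArithmeticFunction ℝ :=
  (ArithmeticFunction.id : ArithmeticFunction ℝ).pmul (prodPrimeFactors fun p => 1 + (p : ℝ)⁻¹)

lemma dedekindPsi_apply {n : ℕ} (hn : n ≠ 0) :
    dedekindPsi n = n * ∏ p ∈ n.primeFactors, (1 + (p : ℝ)⁻¹) := by
  simp [dedekindPsi, pmul_apply, prodPrimeFactors_apply hn]

lemma isMultiplicative_dedekindPsi : dedekindPsi.IsMultiplicative :=
  isMultiplicative_id.natCast.pmul (IsMultiplicative.prodPrimeFactors _)

lemma dedekindPsi_apply_prime {p : ℕ} (hp : p.Prime) : dedekindPsi p = p + 1 := by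
  have hp₀ : (p : ℝ) ≠ 0 := by exact_mod_cast hp.ne_zero
  rw [dedekindPsi_apply hp.ne_zero, hp.primeFactors, prod_singleton]
  field_simp

lemma totient_mul_dedekindPsi (n : ℕ) :
    (n.totient : ℝ) * dedekindPsi n = n ^ 2 * ∑ t ∈ n.divisors, (μ t : ℝ) / t ^ 2 := by
  rcases eq_or_ne n 0 with rfl | hn
  · simp
  have htotient : (n.totient : ℝ) = n * ∏ p ∈ n.primeFactors, (1 - (p : ℝ)⁻¹) := by
    have h := congrArg (Rat.cast : ℚ → ℝ) (Nat.totient_eq_mul_prod_factors n)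
    push_cast at h
    exact h
  have hsum : ∑ t ∈ n.divisors, (μ t : ℝ) / t ^ 2
      = ∏ p ∈ n.primeFactors, (1 - ((p : ℝ) ^ 2)⁻¹) := by
    simpa only [invSq_apply, div_eq_mul_inv] using
      sum_divisors_moebius_mul_eq_prod_one_sub isMultiplicative_invSq hn
  rw [htotient, dedekindPsi_apply hn, hsum, mul_mul_mul_comm, ← pow_two, ← prod_mul_distrib]
  exact congrArg _ (prod_congr rfl fun p _ => by rw [← inv_pow]; ring)

def codivisorMoebiusDivTotient (q : ℕ) : ArithmeticFunction ℝ :=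
  ⟨fun e => (μ (q / e) : ℝ) / (q / e).totient, by simp⟩

lemma codivisorMoebiusDivTotient_apply (q e : ℕ) :
    codivisorMoebiusDivTotient q e = (μ (q / e) : ℝ) / (q / e).totient := rfl

theorem sum_divisors_moebius_mul_codivisorMoebiusDivTotient {q : ℕ} (hq : q ≠ 0) :
    ∑ d ∈ q.divisors, ((μ : ArithmeticFunction ℝ) * codivisorMoebiusDivTotient q) d / d ^ 2
      = (-1) ^ q.primeFactors.card * (∏ p ∈ q.primeFactors, (p : ℝ)) / q ^ 2 := by
  have hterm : ∀ m ∈ q.divisors, codivisorMoebiusDivTotient q (q / m) / ((q / m : ℕ) : ℝ) ^ 2 *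
      ∑ t ∈ m.divisors, (μ t : ℝ) / t ^ 2 = μ m * dedekindPsi m / q ^ 2 := fun m hm => by
    have hmq := Nat.dvd_of_mem_divisors hm
    have hm₀ : (m : ℝ) ≠ 0 := by exact_mod_cast (Nat.pos_of_mem_divisors hm).ne'
    have hφ : (m.totient : ℝ) ≠ 0 := by
      exact_mod_cast (Nat.totient_pos.mpr (Nat.pos_of_mem_divisors hm)).ne'
    have hS : ∑ t ∈ m.divisors, (μ t : ℝ) / t ^ 2 = m.totient * dedekindPsi m / m ^ 2 := by
      rw [totient_mul_dedekindPsi, mul_div_cancel_left₀ _ (pow_ne_zero 2 hm₀)]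
    rw [codivisorMoebiusDivTotient_apply, Nat.div_div_self hmq hq, Nat.cast_div hmq hm₀, hS]
    field_simp
  rw [sum_divisors_moebius_mul_div_sq, Nat.sum_divisorsAntidiagonal' (fun j m =>
      codivisorMoebiusDivTotient q j / (j : ℝ) ^ 2 * ∑ t ∈ m.divisors, (μ t : ℝ) / t ^ 2),
    sum_congr rfl hterm, ← sum_div,
    sum_divisors_moebius_mul_eq_prod_one_sub isMultiplicative_dedekindPsi hq, ← prod_neg]
  refine congrArg (· / _) (prod_congr rfl fun p hp => ?_)
  rw [dedekindPsi_apply_prime (Nat.prime_of_mem_primeFactors hp)]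
  ring

lemma isCoprime_mul_div_gcd_div_gcd {a : ℤ} {q : ℕ} (ha : IsCoprime a q) {m : ℕ} (hq : 0 < q) :
    IsCoprime (a * (m / q.gcd m : ℕ)) (q / q.gcd m : ℕ) :=
  (ha.of_isCoprime_of_dvd_right
      (Int.natCast_dvd_natCast.mpr (Nat.div_dvd_of_dvd (Nat.gcd_dvd_left q m)))).mul_left
    (Nat.isCoprime_iff_coprime.mpr
      (Nat.coprime_div_gcd_div_gcd (Nat.gcd_pos_of_pos_left m hq)).symm)

lemma term_eq_codivisorMoebiusDivTotient_div_sq {q : ℕ} (hq : 0 < q) {a : ℤ}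
    (haq : Int.gcd a q = 1) (k : ℕ) :
    ((1 / (((q / Nat.gcd q (k + 1)).totient : ℝ) * ((k : ℝ) + 1) ^ 2) : ℝ) : ℂ) *
        ∑ ℓ ∈ (Finset.Icc 1 (q / Nat.gcd q (k + 1))).filter
            (fun ℓ => Nat.Coprime ℓ (q / Nat.gcd q (k + 1))),
          ee ((a : ℝ) * ((k : ℝ) + 1) / (Nat.gcd q (k + 1) : ℝ) * ℓ /
            ((q / Nat.gcd q (k + 1) : ℕ) : ℝ))
      = ((codivisorMoebiusDivTotient q (q.gcd (k + 1)) / ((k + 1 : ℕ) : ℝ) ^ 2 : ℝ) : ℂ) := by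
  set g := q.gcd (k + 1)
  have hcop : Int.gcd (a * ((k + 1) / g : ℕ)) (q / g : ℕ) = 1 :=
    Int.isCoprime_iff_gcd_eq_one.mp
      (isCoprime_mul_div_gcd_div_gcd (Int.isCoprime_iff_gcd_eq_one.mpr haq) hq)
  have hgk : g ∣ k + 1 := Nat.gcd_dvd_right q (k + 1)
  have hqg : 0 < q / g := Nat.div_pos (Nat.gcd_le_left _ hq) (Nat.gcd_pos_of_pos_left _ hq)
  have hg : (g : ℝ) ≠ 0 := by exact_mod_cast (Nat.gcd_pos_of_pos_left _ hq).ne'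
  clear_value g
  have harg : ∀ ℓ : ℕ, (a : ℝ) * ((k : ℝ) + 1) / g * ℓ / ((q / g : ℕ) : ℝ)
      = ((a * ((k + 1) / g : ℕ) : ℤ) : ℝ) * ℓ / ((q / g : ℕ) : ℝ) := fun ℓ => by
    rw [Int.cast_mul, Int.cast_natCast, Nat.cast_div hgk hg]
    push_cast
    ring
  simp_rw [harg]
  rw [← ramanujanSum, ramanujanSum_of_coprime hqg hcop, codivisorMoebiusDivTotient_apply,
    one_div, mul_inv]
  push_cast
  ring

theorem statement19 (q : ℕ) (hq : 0 < q) (a : ℤ) (haq : Int.gcd a q = 1) :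
    (∑' k : ℕ,
      ((1 / (((q / Nat.gcd q (k + 1)).totient : ℝ) * ((k : ℝ) + 1) ^ 2) : ℝ) : ℂ) *
        ∑ ℓ ∈ (Finset.Icc 1 (q / Nat.gcd q (k + 1))).filter
            (fun ℓ => Nat.Coprime ℓ (q / Nat.gcd q (k + 1))),
          ee ((a : ℝ) * ((k : ℝ) + 1) / (Nat.gcd q (k + 1) : ℝ) * ℓ /
            ((q / Nat.gcd q (k + 1) : ℕ) : ℝ))) =
    (((Real.pi ^ 2 / 6) * (-1 : ℝ) ^ (q.primeFactors.card) *
        (∏ p ∈ q.primeFactors, (p : ℝ)) / (q : ℝ) ^ 2 : ℝ) : ℂ) := by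
  have hseries := hasSum_gcd_div_sq (codivisorMoebiusDivTotient q) hq.ne'
  rw [← hasSum_nat_add_iff' 1,
    sum_divisors_moebius_mul_codivisorMoebiusDivTotient hq.ne'] at hseries
  -- the dropped `n = 0` term vanishes because `x / 0 = 0`
  simp only [range_one, sum_singleton, Nat.cast_zero, zero_pow two_ne_zero, div_zero, sub_zero,
    ← mul_div_assoc, ← mul_assoc] at hseries
  rw [tsum_congr (term_eq_codivisorMoebiusDivTotient_div_sq hq haq)]
  exact (Complex.hasSum_ofReal.mpr hseries).tsum_eq
end
end
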